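/- Let δ ∈ (0, 1/8). Then for every real number R ≥ 1 and every t ∈ ℝ with |t| ≤ δR, the partial sum S₁ = ∑_{m ∈ ℕ, m ≤ R} (|t|^m / m!) · exp(−R² / (4(m+1))) satisfies S₁ ≤ exp(−(1/8 − δ) R). -/
import Mathlib


/-- The estimate of the partial sum `S₁` in the proof of the pointwise kernel
estimate: for `δ ∈ (0, 1/8)`, `R ≥ 1` and `|t| ≤ δ R`,
`∑_{m ≤ R} (|t|^m / m!) e^{-R²/(4(m+1))} ≤ e^{-(1/8 - δ) R}`. -/
theorem stmt_1 (δ : ℝ) (hδ : δ ∈ Set.Ioo (0 : ℝ) (1 / 8))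
    (R t : ℝ) (hR : 1 ≤ R) (ht : |t| ≤ δ * R) :
    ∑ m ∈ Finset.range (⌊R⌋₊ + 1),
        |t| ^ m / (Nat.factorial m) * Real.exp (-(R ^ 2) / (4 * ((m : ℝ) + 1))) ≤
      Real.exp (-(1 / 8 - δ) * R) := by
  have hR0 : (0:ℝ) < R := lt_of_lt_of_le one_pos hR
  have key : ∀ m ∈ Finset.range (⌊R⌋₊ + 1),
      |t| ^ m / (Nat.factorial m) * Real.exp (-(R ^ 2) / (4 * ((m : ℝ) + 1))) ≤
      |t| ^ m / (Nat.factorial m) * Real.exp (-R / 8) := by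
    intro m hm
    apply mul_le_mul_of_nonneg_left _ (by positivity)
    apply Real.exp_le_exp.mpr
    have hmR : (m : ℝ) ≤ R := by
      have : m ≤ ⌊R⌋₊ := Nat.lt_succ_iff.mp (Finset.mem_range.mp hm)
      calc (m:ℝ) ≤ (⌊R⌋₊ : ℝ) := by exact_mod_cast this
        _ ≤ R := Nat.floor_le hR0.le
    rw [neg_div, neg_div, neg_le_neg_iff, div_le_div_iff₀ (by norm_num) (by positivity)]
    nlinarith
  calc ∑ m ∈ Finset.range (⌊R⌋₊ + 1),
        |t| ^ m / (Nat.factorial m) * Real.exp (-(R ^ 2) / (4 * ((m : ℝ) + 1)))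
      ≤ ∑ m ∈ Finset.range (⌊R⌋₊ + 1),
        |t| ^ m / (Nat.factorial m) * Real.exp (-R / 8) := Finset.sum_le_sum key
    _ = (∑ m ∈ Finset.range (⌊R⌋₊ + 1), |t| ^ m / (Nat.factorial m)) * Real.exp (-R / 8) := by
        rw [Finset.sum_mul]
    _ ≤ Real.exp |t| * Real.exp (-R / 8) := by
        apply mul_le_mul_of_nonneg_right _ (Real.exp_pos _).le
        exact Real.sum_le_exp_of_nonneg (abs_nonneg t) _
    _ ≤ Real.exp (δ * R) * Real.exp (-R / 8) :=
        mul_le_mul_of_nonneg_right (Real.exp_le_exp.mpr ht) (Real.exp_pos _).le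
    _ = Real.exp (-(1 / 8 - δ) * R) := by rw [← Real.exp_add]; ring_nf
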